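/- Let (L, v) be a complete discretely valued skew field with uniformizer σ, and let g₁,…,g_k ∈ L[t] be monic nonconstant polynomials whose Newton polygons have only positive slopes. Let M be a left L[t]-module isomorphic to ⊕ᵢ L[t]/gᵢL[t], and Λ an O-lattice in M. Then there exists n₀ ∈ ℕ such that tⁿΛ ⊇ σ⁻¹Λ for all n ≥ n₀. -/

import Mathlib

/-- The valuation of a coefficient, as an extended real number. -/
noncomputable def evv {L : Type*} (v : L → WithTop ℤ) (x : L) : EReal :=
  WithTop.recTopCoe ⊤ (fun n : ℤ => ((n : ℝ) : EReal)) (v x)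

/-- The Newton polygon (lower convex hull function) of a polynomial. -/
noncomputable def NP {L : Type*} [DivisionRing L] (v : L → WithTop ℤ)
    (f : Polynomial L) (x : ℝ) : EReal :=
  sSup {y : EReal | ∃ a b : ℝ,
    (∀ i ∈ f.support, ((a * i + b : ℝ) : EReal) ≤ evv v (f.coeff i)) ∧
    y = ((a * x + b : ℝ) : EReal)}

open Polynomial

/-!
Multiplication by `t` is an `L`-linear automorphism `T` of `M`, and `S = T⁻¹` contracts the
`O`-lattice spanned by the vectors `tʲ eᵢ` (`j < deg gᵢ`), where `eᵢ` is the class of `1` in the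
`i`-th summand: `S` sends `tʲ⁺¹ eᵢ ↦ tʲ eᵢ` and `eᵢ ↦ wᵢ eᵢ`, where
`wᵢ = -gᵢ(0)⁻¹ (gᵢ - gᵢ(0)) / t` is the inverse of `t` modulo `gᵢ`. Positive Newton slopes imply
`v(gᵢ(0)) < v(coeff j gᵢ)` for all `j ≥ 1`, so every coefficient of `wᵢ` has valuation `≥ 1`.
Hence `S` preserves that lattice and `S^D`, `D = max deg gᵢ`, maps it into `σ` times itself.
Since any two lattices are commensurable, `σ⁻¹ Sⁿ Λ ⊆ Λ` for large `n`; applying `tⁿ` gives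
`σ⁻¹ Λ ⊆ tⁿ Λ`.
-/

section Coords

variable {L M N ι κ : Type*} [DivisionRing L] [AddCommGroup M] [Module L M]
  [AddCommGroup N] [Module L N] [Fintype ι] [Fintype κ]
  (v : AddValuation L (WithTop ℤ))

def CoordsGE (c : ι → M) (t : ℤ) (m : M) : Prop :=
  ∃ f : ι → L, (∀ β, (t : WithTop ℤ) ≤ v (f β)) ∧ m = ∑ β, f β • c β

variable {v} {c : ι → M} {t u : ℤ} {m m' : M}

theorem CoordsGE.mono (h : CoordsGE v c t m) (hut : u ≤ t) : CoordsGE v c u m := by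
  obtain ⟨f, hf, rfl⟩ := h
  exact ⟨f, fun β => (WithTop.coe_le_coe.2 hut).trans (hf β), rfl⟩

theorem coordsGE_zero (t : ℤ) : CoordsGE v c t 0 :=
  ⟨0, fun _ => by simp, by simp⟩

theorem coordsGE_apply [DecidableEq ι] (β : ι) : CoordsGE v c 0 (c β) :=
  ⟨Pi.single β 1, fun γ => by rcases eq_or_ne γ β with rfl | h <;> simp [*], by
    simp [Pi.single_apply]⟩

theorem CoordsGE.add (h : CoordsGE v c t m) (h' : CoordsGE v c t m') :
    CoordsGE v c t (m + m') := by
  obtain ⟨f, hf, rfl⟩ := h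
  obtain ⟨f', hf', rfl⟩ := h'
  exact ⟨f + f', fun β => v.map_le_add (hf β) (hf' β), by simp [add_smul, Finset.sum_add_distrib]⟩

theorem CoordsGE.smul {a : L} {s : ℤ} (ha : (s : WithTop ℤ) ≤ v a) (h : CoordsGE v c t m) :
    CoordsGE v c (s + t) (a • m) := by
  obtain ⟨f, hf, rfl⟩ := h
  refine ⟨fun β => a * f β, fun β => ?_, by simp [Finset.smul_sum, smul_smul]⟩
  rw [v.map_mul, WithTop.coe_add]
  exact add_le_add ha (hf β)

theorem coordsGE_sum {α : Type*} (s : Finset α) {x : α → M} (h : ∀ i ∈ s, CoordsGE v c t (x i)) :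
    CoordsGE v c t (∑ i ∈ s, x i) := by
  classical
  induction s using Finset.induction_on with
  | empty => exact coordsGE_zero t
  | insert a s ha ih =>
    rw [Finset.sum_insert ha]
    exact (h a (s.mem_insert_self a)).add (ih fun i hi => h i (Finset.mem_insert_of_mem hi))

theorem CoordsGE.map {d : κ → N} {S : M →ₗ[L] N} (hS : ∀ β, CoordsGE v d u (S (c β)))
    (h : CoordsGE v c t m) : CoordsGE v d (t + u) (S m) := by
  obtain ⟨f, hf, rfl⟩ := h
  simp only [map_sum, map_smul]
  exact coordsGE_sum _ fun β _ => (hS β).smul (hf β)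

theorem exists_coordsGE_of_mem_span (hm : m ∈ Submodule.span L (Set.range c)) :
    ∃ t, CoordsGE v c t m := by
  obtain ⟨f, rfl⟩ := (Submodule.mem_span_range_iff_exists_fun L).1 hm
  exact ⟨(Finset.univ.inf fun β => v (f β)).untopD 0, f,
    fun β => (WithTop.coe_untopD_le _ _).trans (Finset.inf_le (Finset.mem_univ β)), rfl⟩

theorem exists_forall_coordsGE {α : Type*} [Finite α] {x : α → M}
    (h : ∀ i, ∃ t, CoordsGE v c t (x i)) : ∃ t, ∀ i, CoordsGE v c t (x i) := by
  choose t ht using h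
  obtain ⟨t₀, ht₀⟩ := Finite.exists_ge t
  exact ⟨t₀, fun i => (ht i).mono (ht₀ i)⟩

theorem CoordsGE.pow_apply {S : M →ₗ[L] M} (hS : ∀ β, CoordsGE v c 0 (S (c β))) (n : ℕ)
    (h : CoordsGE v c t m) : CoordsGE v c t ((S ^ n) m) := by
  induction n with
  | zero => simpa using h
  | succ n ih => simpa [pow_succ'] using ih.map hS

theorem CoordsGE.pow_apply_of_mul_le {S : M →ₗ[L] M} {D : ℕ} (hS : ∀ β, CoordsGE v c 0 (S (c β)))
    (hSD : ∀ β, CoordsGE v c 1 ((S ^ D) (c β))) (h : CoordsGE v c t m) :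
    ∀ (q n : ℕ), q * D ≤ n → CoordsGE v c (t + q) ((S ^ n) m)
  | 0, n, _ => by simpa using h.pow_apply hS n
  | q + 1, n, hn => by
    have hsplit : S ^ n = S ^ D * S ^ (n - D) := by rw [← pow_add]; congr 1; lia
    have := (h.pow_apply_of_mul_le hS hSD q (n - D) (by lia)).map hSD
    rw [hsplit, Module.End.mul_apply, Nat.cast_succ, ← add_assoc]
    exact this

end Coords

section Lattice

variable {L M ι : Type*} [DivisionRing L] [AddCommGroup M] [Module L M] [Fintype ι]
  {v : AddValuation L (WithTop ℤ)} {O : Subring L} {Λ : Submodule O M} {c : ι → M}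

theorem CoordsGE.mem_of_forall_mem (hO : (O : Set L) = {x | 0 ≤ v x}) (hc : ∀ β, c β ∈ Λ)
    {m : M} (h : CoordsGE v c 0 m) : m ∈ Λ := by
  obtain ⟨f, hf, rfl⟩ := h
  refine Λ.sum_mem fun β _ => Λ.smul_mem (⟨f β, ?_⟩ : O) (hc β)
  rw [← SetLike.mem_coe, hO]
  exact hf β

theorem exists_coordsGE_imp_mem {κ : Type*} [Fintype κ] (hO : (O : Set L) = {x | 0 ≤ v x})
    {b : κ → M} (hb : ∀ j, b j ∈ Λ) (hbspan : ∀ m, m ∈ Submodule.span L (Set.range b)) :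
    ∃ A, ∀ m, CoordsGE v c A m → m ∈ Λ := by
  obtain ⟨u, hu⟩ := exists_forall_coordsGE (v := v) fun β =>
    exists_coordsGE_of_mem_span (hbspan (c β))
  refine ⟨-u, fun m hm => CoordsGE.mem_of_forall_mem hO hb ?_⟩
  simpa using hm.map (S := LinearMap.id) hu

theorem exists_forall_mem_coordsGE (hO : (O : Set L) = {x | 0 ≤ v x}) (hfg : Λ.FG)
    (hspan : ∀ m, m ∈ Submodule.span L (Set.range c)) :
    ∃ t, ∀ m ∈ Λ, CoordsGE v c t m := by
  obtain ⟨s, rfl⟩ := hfg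
  obtain ⟨t, ht⟩ := exists_forall_coordsGE (v := v) (x := ((↑) : s → M)) fun m =>
    exists_coordsGE_of_mem_span (hspan m)
  refine ⟨t, fun m hm => ?_⟩
  induction hm using Submodule.span_induction with
  | mem x hx => exact ht ⟨x, hx⟩
  | zero => exact coordsGE_zero t
  | add x y _ _ hx hy => exact hx.add hy
  | smul o x _ hx =>
    have ho : ((0 : ℤ) : WithTop ℤ) ≤ v o := by simpa [← SetLike.mem_coe, hO] using o.2
    simpa [Subring.smul_def] using hx.smul ho

theorem exists_forall_smul_pow_apply_mem {κ : Type*} [Fintype κ]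
    (hO : (O : Set L) = {x | 0 ≤ v x}) (hfg : Λ.FG)
    {b : κ → M} (hb : ∀ j, b j ∈ Λ) (hbspan : ∀ m, m ∈ Submodule.span L (Set.range b))
    (hspan : ∀ m, m ∈ Submodule.span L (Set.range c)) {S : M →ₗ[L] M} {D : ℕ}
    (hS : ∀ β, CoordsGE v c 0 (S (c β))) (hSD : ∀ β, CoordsGE v c 1 ((S ^ D) (c β)))
    {a : L} {s : ℤ} (ha : (s : WithTop ℤ) ≤ v a) :
    ∃ n₀, ∀ n ≥ n₀, ∀ m ∈ Λ, a • (S ^ n) m ∈ Λ := by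
  obtain ⟨t, ht⟩ := exists_forall_mem_coordsGE hO hfg hspan
  obtain ⟨A, hA⟩ := exists_coordsGE_imp_mem (c := c) hO hb hbspan
  refine ⟨(A - s - t).toNat * D, fun n hn m hm => hA _ ?_⟩
  refine (((ht m hm).pow_apply_of_mul_le hS hSD _ n hn).smul ha).mono ?_
  have := Int.self_le_toNat (A - s - t)
  lia

end Lattice

section NewtonPolygon

variable {L : Type*} {v : L → WithTop ℤ}

theorem evv_eq_coe {x : L} {z : ℤ} (h : v x = z) : evv v x = ((z : ℝ) : EReal) := by
  simp [evv, h]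

theorem evv_eq_top {x : L} (h : v x = ⊤) : evv v x = ⊤ := by
  simp [evv, h]

theorem lt_of_evv_lt_evv {x y : L} (h : evv v x < evv v y) : v x < v y := by
  cases hx : v x <;> cases hy : v y <;> simp_all [evv_eq_coe, evv_eq_top]

variable [DivisionRing L]

theorem NP_le_evv_coeff {f : L[X]} {j : ℕ} (hj : j ∈ f.support) :
    NP v f j ≤ evv v (f.coeff j) :=
  sSup_le fun _ ⟨_, _, hline, hy⟩ => hy ▸ hline j hj

theorem evv_coeff_zero_le_NP_zero {f : L[X]} (h : v (f.coeff 0) ≠ ⊤) :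
    evv v (f.coeff 0) ≤ NP v f 0 := by
  obtain ⟨z₀, hz₀⟩ := WithTop.ne_top_iff_exists.1 h
  obtain ⟨a, ha⟩ := Finset.bddBelow
    (f.support.image fun i => (((v (f.coeff i)).untopD 0 : ℤ) - z₀ : ℝ) / i)
  rw [evv_eq_coe hz₀.symm]
  refine le_sSup ⟨a, z₀, fun i hi => ?_, by simp⟩
  rcases Nat.eq_zero_or_pos i with rfl | hi0
  · simp [evv_eq_coe hz₀.symm]
  cases hvi : v (f.coeff i) with
  | top => simp [evv_eq_top hvi]
  | coe zi =>
    have := ha (Finset.mem_coe.2 (Finset.mem_image_of_mem _ hi))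
    rw [hvi, WithTop.untopD_coe, le_div_iff₀ (Nat.cast_pos.2 hi0)] at this
    rw [evv_eq_coe hvi, EReal.coe_le_coe_iff]
    linarith

theorem valuation_coeff_zero_lt_of_strictMonoOn_NP (v : AddValuation L (WithTop ℤ)) {f : L[X]}
    (h0 : f.coeff 0 ≠ 0) (hinc : ∀ x y : ℝ, 0 ≤ x → x < y → y ≤ (f.natDegree : ℝ) →
      NP v f x < NP v f y) {j : ℕ} (hj : 1 ≤ j) :
    v (f.coeff 0) < v (f.coeff j) := by
  have hfin : v (f.coeff 0) ≠ ⊤ := (v.ne_top_iff).2 h0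
  by_cases hcj : f.coeff j = 0
  · rw [hcj, v.map_zero]
    exact hfin.lt_top
  have hjd : j ≤ f.natDegree := le_natDegree_of_ne_zero hcj
  refine lt_of_evv_lt_evv ((evv_coeff_zero_le_NP_zero hfin).trans_lt ?_)
  refine (hinc 0 j le_rfl (by exact_mod_cast hj) (by exact_mod_cast hjd)).trans_le ?_
  exact NP_le_evv_coeff (mem_support_iff.2 hcj)

end NewtonPolygon

theorem Polynomial.exists_eq_mul_add_natDegree_lt {R : Type*} [Ring R] {g : R[X]} (hg : g.Monic)
    (hd : 0 < g.natDegree) (p : R[X]) :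
    ∃ q r, p = q * g + r ∧ r.natDegree < g.natDegree := by
  -- Mathlib divides as `p = p %ₘ g + g * (p /ₘ g)`; to get `g` on the right, divide in `Rᵐᵒᵖ[X]`.
  obtain ⟨G, hGg⟩ : ∃ G, G = opRingEquiv R (MulOpposite.op g) := ⟨_, rfl⟩
  have hGdeg : G.natDegree = g.natDegree := by rw [hGg, natDegree_opRingEquiv]; rfl
  have hG : G.Monic := by
    rw [Monic, hGg, leadingCoeff_opRingEquiv]
    simp [hg.leadingCoeff]
  have hG1 : G ≠ 1 := fun h => by simp [h] at hGdeg; omega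
  set P := opRingEquiv R (MulOpposite.op p)
  refine ⟨((opRingEquiv R).symm (P /ₘ G)).unop, ((opRingEquiv R).symm (P %ₘ G)).unop, ?_, ?_⟩
  · have := congrArg (fun x => ((opRingEquiv R).symm x).unop) (modByMonic_add_div P G)
    simpa [P, hGg, add_comm] using this.symm
  · have := natDegree_modByMonic_lt P hG hG1
    rwa [← RingEquiv.apply_symm_apply (opRingEquiv R) (P %ₘ G), natDegree_opRingEquiv,
      hGdeg] at this

section QuotientGenerators

variable {R M κ : Type*} [Ring R] [AddCommGroup M] [Module R M] [DecidableEq κ]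
  {I : κ → Submodule R R} (e : M ≃ₗ[R] ((i : κ) → R ⧸ I i))

theorem LinearEquiv.smul_symm_single_mk_one_eq_zero {i : κ} {r : R} (hr : r ∈ I i) :
    r • e.symm (Pi.single i (Submodule.Quotient.mk 1)) = 0 := by
  rw [← map_smul, ← Pi.single_smul, ← Submodule.Quotient.mk_smul, smul_eq_mul, mul_one,
    (Submodule.Quotient.mk_eq_zero _).2 hr, Pi.single_zero, map_zero]

theorem LinearEquiv.span_range_symm_single_mk_one [Fintype κ] :
    Submodule.span R (Set.range fun i => e.symm (Pi.single i (Submodule.Quotient.mk 1))) = ⊤ := by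
  refine eq_top_iff.2 fun y _ => ?_
  rw [← e.symm_apply_apply y, ← Finset.univ_sum_single (e y), map_sum]
  refine Submodule.sum_mem _ fun i _ => ?_
  obtain ⟨r, hr⟩ := Submodule.mkQ_surjective _ (e y i)
  rw [← hr, Submodule.mkQ_apply, ← mul_one r, ← smul_eq_mul, Submodule.Quotient.mk_smul,
    Pi.single_smul (f := fun i => R ⧸ I i), map_smul]
  exact Submodule.smul_mem _ _ (Submodule.subset_span ⟨i, rfl⟩)

end QuotientGenerators

section CyclicModule

variable {L M κ : Type*} [DivisionRing L] [AddCommGroup M] [Module L[X] M] [Module L M]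
  (hcompat : ∀ (a : L) (m : M), a • m = (C a : L[X]) • m)

noncomputable def mulXLinearMap : M →ₗ[L] M where
  toFun m := (X : L[X]) • m
  map_add' := smul_add X
  map_smul' a m := by
    rw [RingHom.id_apply, hcompat, hcompat, smul_smul, smul_smul, X_mul]

include hcompat in
theorem mulXLinearMap_pow_apply (n : ℕ) (m : M) :
    (mulXLinearMap hcompat ^ n) m = (X ^ n : L[X]) • m := by
  induction n with
  | zero => simp
  | succ n ih => rw [pow_succ', Module.End.mul_apply, ih, pow_succ', mul_smul]; rfl

include hcompat in
theorem smul_eq_sum_coeff_smul {p : L[X]} {d : ℕ} (hp : p.natDegree < d) (m : M) :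
    p • m = ∑ j : Fin d, p.coeff j • ((X : L[X]) ^ (j : ℕ) • m) := by
  conv_lhs => rw [p.as_sum_range' d hp, Finset.sum_smul]
  rw [← Fin.sum_univ_eq_sum_range (fun j => monomial j (p.coeff j) • m)]
  simp only [← C_mul_X_pow_eq_monomial, mul_smul, hcompat]

noncomputable def cyclicVectors (g : κ → L[X]) (m : κ → M) (β : Σ i, Fin (g i).natDegree) : M :=
  (X : L[X]) ^ (β.2 : ℕ) • m β.1

variable [Fintype κ] {g : κ → L[X]} {m : κ → M}

include hcompat in
theorem mem_span_cyclicVectors (hmonic : ∀ i, (g i).Monic) (hdeg : ∀ i, 0 < (g i).natDegree)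
    (hann : ∀ i, g i • m i = 0) (hgen : Submodule.span L[X] (Set.range m) = ⊤) (y : M) :
    y ∈ Submodule.span L (Set.range (cyclicVectors g m)) := by
  obtain ⟨p, rfl⟩ := (Submodule.mem_span_range_iff_exists_fun L[X]).1
    (hgen ▸ Submodule.mem_top (x := y))
  refine Submodule.sum_mem _ fun i _ => ?_
  obtain ⟨q, r, hpi, hr⟩ := exists_eq_mul_add_natDegree_lt (hmonic i) (hdeg i) (p i)
  rw [hpi, add_smul, mul_smul, hann, smul_zero, zero_add, smul_eq_sum_coeff_smul hcompat hr]
  exact Submodule.sum_mem _ fun j _ =>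
    Submodule.smul_mem _ _ (Submodule.subset_span ⟨⟨i, j⟩, rfl⟩)

noncomputable def invX (f : L[X]) : L[X] :=
  -(C (f.coeff 0)⁻¹ * f.divX)

theorem X_mul_invX {f : L[X]} (h0 : f.coeff 0 ≠ 0) :
    X * invX f = 1 - C (f.coeff 0)⁻¹ * f := by
  rw [invX, mul_neg, ← mul_assoc, X_mul, mul_assoc, eq_sub_of_add_eq (X_mul_divX_add f), mul_sub,
    ← C_mul, inv_mul_cancel₀ h0, C_1]
  abel

theorem natDegree_invX_lt {f : L[X]} (hd : 0 < f.natDegree) : (invX f).natDegree < f.natDegree := by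
  rw [invX, natDegree_neg]
  exact (natDegree_C_mul_le _ _).trans_lt (by rw [natDegree_divX_eq_natDegree_tsub_one]; omega)

theorem one_le_valuation_coeff_invX (v : AddValuation L (WithTop ℤ)) {f : L[X]}
    (hslope : ∀ j, 1 ≤ j → v (f.coeff 0) < v (f.coeff j)) (j : ℕ) :
    ((1 : ℤ) : WithTop ℤ) ≤ v ((invX f).coeff j) := by
  obtain ⟨z₀, hz₀⟩ := WithTop.ne_top_iff_exists.1 (hslope 1 le_rfl).ne_top
  have hlt := hslope (j + 1) (by omega)
  rw [invX, coeff_neg, coeff_C_mul, coeff_divX, v.map_neg, v.map_mul, v.map_inv, ← hz₀]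
  rw [← hz₀] at hlt
  cases hv : v (f.coeff (j + 1)) with
  | top => simp
  | coe z =>
    rw [hv, WithTop.coe_lt_coe] at hlt
    rw [← WithTop.LinearOrderedAddCommGroup.coe_neg, ← WithTop.coe_add, WithTop.coe_le_coe]
    omega

theorem coeff_zero_ne_zero_of_valuation_lt {v : AddValuation L (WithTop ℤ)} {f : L[X]}
    (hslope : ∀ j, 1 ≤ j → v (f.coeff 0) < v (f.coeff j)) : f.coeff 0 ≠ 0 := fun h => by
  simpa [h] using hslope 1 le_rfl

include hcompat in
theorem mulXLinearMap_pow_succ_invX_smul {f : L[X]} {y : M} (h0 : f.coeff 0 ≠ 0) (hy : f • y = 0)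
    (j : ℕ) : (mulXLinearMap hcompat ^ (j + 1)) (invX f • y) = (X : L[X]) ^ j • y := by
  rw [mulXLinearMap_pow_apply, pow_succ, mul_smul, ← mul_smul X, X_mul_invX h0, sub_smul, one_smul,
    mul_smul, hy, smul_zero, sub_zero]

theorem range_mulXLinearMap_eq_top (hmonic : ∀ i, (g i).Monic) (hdeg : ∀ i, 0 < (g i).natDegree)
    (h0 : ∀ i, (g i).coeff 0 ≠ 0) (hann : ∀ i, g i • m i = 0)
    (hgen : Submodule.span L[X] (Set.range m) = ⊤) :
    LinearMap.range (mulXLinearMap hcompat) = ⊤ := by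
  refine eq_top_iff.2 fun y _ => Submodule.span_le.2 ?_
    (mem_span_cyclicVectors hcompat hmonic hdeg hann hgen y)
  rintro _ ⟨⟨i, j⟩, rfl⟩
  refine ⟨(mulXLinearMap hcompat ^ (j : ℕ)) (invX (g i) • m i), ?_⟩
  rw [← Module.End.mul_apply, ← pow_succ', mulXLinearMap_pow_succ_invX_smul hcompat (h0 i) (hann i)]
  rfl

variable (v : AddValuation L (WithTop ℤ))

include hcompat in
theorem coordsGE_invX_smul (hdeg : ∀ i, 0 < (g i).natDegree)
    (hslope : ∀ i j, 1 ≤ j → v ((g i).coeff 0) < v ((g i).coeff j)) (i : κ) :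
    CoordsGE v (cyclicVectors g m) 1 (invX (g i) • m i) := by
  classical
  rw [smul_eq_sum_coeff_smul hcompat (natDegree_invX_lt (hdeg i))]
  exact coordsGE_sum _ fun j _ => by
    simpa [cyclicVectors] using (coordsGE_apply (v := v) (c := cyclicVectors g m) ⟨i, j⟩).smul
      (one_le_valuation_coeff_invX v (hslope i) j)

variable {hcompat} {S : M →ₗ[L] M}

theorem coordsGE_apply_cyclicVectors (hdeg : ∀ i, 0 < (g i).natDegree)
    (hslope : ∀ i j, 1 ≤ j → v ((g i).coeff 0) < v ((g i).coeff j)) (hann : ∀ i, g i • m i = 0)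
    (hS : S * mulXLinearMap hcompat = 1) (β : Σ i, Fin (g i).natDegree) :
    CoordsGE v (cyclicVectors g m) 0 (S (cyclicVectors g m β)) := by
  classical
  obtain ⟨i, j, hj⟩ := β
  have h0 := coeff_zero_ne_zero_of_valuation_lt (hslope i)
  have hβ : cyclicVectors g m ⟨i, ⟨j, hj⟩⟩ =
      mulXLinearMap hcompat ((mulXLinearMap hcompat ^ j) (invX (g i) • m i)) := by
    rw [← Module.End.mul_apply, ← pow_succ', mulXLinearMap_pow_succ_invX_smul hcompat h0 (hann i)]
    rfl
  rw [hβ, ← Module.End.mul_apply S, hS, Module.End.one_apply]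
  cases j with
  | zero => exact (coordsGE_invX_smul hcompat v hdeg hslope i).mono zero_le_one
  | succ j =>
    rw [mulXLinearMap_pow_succ_invX_smul hcompat h0 (hann i)]
    exact coordsGE_apply (c := cyclicVectors g m) ⟨i, ⟨j, by omega⟩⟩

theorem coordsGE_pow_apply_cyclicVectors (hdeg : ∀ i, 0 < (g i).natDegree)
    (hslope : ∀ i j, 1 ≤ j → v ((g i).coeff 0) < v ((g i).coeff j)) (hann : ∀ i, g i • m i = 0)
    (hS : S * mulXLinearMap hcompat = 1) {D : ℕ} (hD : ∀ i, (g i).natDegree ≤ D)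
    (β : Σ i, Fin (g i).natDegree) :
    CoordsGE v (cyclicVectors g m) 1 ((S ^ D) (cyclicVectors g m β)) := by
  obtain ⟨i, j, hj⟩ := β
  have hβ : cyclicVectors g m ⟨i, ⟨j, hj⟩⟩ =
      (mulXLinearMap hcompat ^ (j + 1)) (invX (g i) • m i) :=
    (mulXLinearMap_pow_succ_invX_smul hcompat (coeff_zero_ne_zero_of_valuation_lt (hslope i))
      (hann i) j).symm
  have hsplit : S ^ D = S ^ (D - (j + 1)) * S ^ (j + 1) := by
    rw [← pow_add]; congr 1; have := hD i; omega
  rw [hβ, hsplit, Module.End.mul_apply, ← Module.End.mul_apply (S ^ (j + 1)),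
    pow_mul_pow_eq_one _ hS, Module.End.one_apply]
  exact (coordsGE_invX_smul hcompat v hdeg hslope i).pow_apply
    (coordsGE_apply_cyclicVectors v hdeg hslope hann hS) _

end CyclicModule

theorem exists_smul_image_subset_X_pow_smul_image {L M κ : Type*} [DivisionRing L]
    [AddCommGroup M] [Module L[X] M] [Module L M] [Fintype κ]
    (hcompat : ∀ (a : L) (m : M), a • m = (C a : L[X]) • m) (v : AddValuation L (WithTop ℤ))
    {g : κ → L[X]} (hmonic : ∀ i, (g i).Monic) (hdeg : ∀ i, 0 < (g i).natDegree)
    (hslope : ∀ i j, 1 ≤ j → v ((g i).coeff 0) < v ((g i).coeff j))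
    {m : κ → M} (hann : ∀ i, g i • m i = 0) (hgen : Submodule.span L[X] (Set.range m) = ⊤)
    {O : Subring L} (hO : (O : Set L) = {x | 0 ≤ v x}) {Λ : Submodule O M} (hfg : Λ.FG)
    (hbasis : ∃ (n : ℕ) (b : Module.Basis (Fin n) L M), ∀ i, b i ∈ Λ)
    {a : L} {s : ℤ} (ha : (s : WithTop ℤ) ≤ v a) :
    ∃ n₀, ∀ n ≥ n₀, (fun y : M => a • y) '' (Λ : Set M) ⊆
      (fun y : M => ((X : L[X]) ^ n) • y) '' (Λ : Set M) := by
  obtain ⟨_, b, hb⟩ := hbasis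
  have : Module.Finite L M := Module.Finite.of_basis b
  obtain ⟨S, hTS, hST⟩ := isUnit_iff_exists.1 <| (LinearMap.isUnit_iff_range_eq_top _).2 <|
    range_mulXLinearMap_eq_top hcompat hmonic hdeg
      (fun i => coeff_zero_ne_zero_of_valuation_lt (hslope i)) hann hgen
  obtain ⟨D, hD⟩ := Finite.exists_le fun i => (g i).natDegree
  obtain ⟨n₀, hn₀⟩ := exists_forall_smul_pow_apply_mem hO hfg hb b.mem_span
    (mem_span_cyclicVectors hcompat hmonic hdeg hann hgen)
    (coordsGE_apply_cyclicVectors v hdeg hslope hann hST)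
    (coordsGE_pow_apply_cyclicVectors v hdeg hslope hann hST hD) ha
  refine ⟨n₀, fun n hn _ ⟨y, hy, hay⟩ => ⟨a • (S ^ n) y, hn₀ n hn y hy, ?_⟩⟩
  rw [← hay]
  change (X ^ n : L[X]) • a • (S ^ n) y = a • y
  rw [← mulXLinearMap_pow_apply hcompat, map_smul, ← Module.End.mul_apply,
    pow_mul_pow_eq_one n hTS, Module.End.one_apply]

theorem stmt17_general {L M : Type*} [DivisionRing L]
    [AddCommGroup M] [Module (Polynomial L) M] [Module L M]
    (hcompat : ∀ (a : L) (m : M), a • m = (Polynomial.C a : Polynomial L) • m)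
    (v : L → WithTop ℤ)
    (hv0 : ∀ x : L, v x = ⊤ ↔ x = 0)
    (hadd : ∀ x y : L, min (v x) (v y) ≤ v (x + y))
    (hmul : ∀ x y : L, v (x * y) = v x + v y)
    (O : Subring L) (hO : (O : Set L) = {x : L | 0 ≤ v x})
    (σ : L) (hσ : v σ = 1)
    (k : ℕ) (g : Fin k → Polynomial L)
    (hmonic : ∀ i, (g i).Monic) (hdeg : ∀ i, 0 < (g i).natDegree)
    (hpos : ∀ i, (g i).coeff 0 ≠ 0 ∧
      ∀ x y : ℝ, 0 ≤ x → x < y → y ≤ ((g i).natDegree : ℝ) →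
        NP v (g i) x < NP v (g i) y)
    (hiso : Nonempty (M ≃ₗ[Polynomial L]
      (∀ i : Fin k, Polynomial L ⧸ Submodule.span (Polynomial L) {g i})))
    (Λ : Submodule ↥O M) (hfg : Λ.FG)
    (hbasis : ∃ (n : ℕ) (b : Module.Basis (Fin n) L M), ∀ i, b i ∈ Λ) :
    ∃ n₀ : ℕ, ∀ n ≥ n₀,
      (fun m : M => σ⁻¹ • m) '' (Λ : Set M) ⊆
        (fun m : M => ((Polynomial.X : Polynomial L) ^ n) • m) '' (Λ : Set M) := by
  obtain ⟨e⟩ := hiso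
  have hv1 : v 1 = 0 := by
    have h := hmul 1 1
    rw [one_mul] at h
    obtain ⟨z, hz⟩ := WithTop.ne_top_iff_exists.1 fun h1 => one_ne_zero ((hv0 1).1 h1)
    rw [← hz, ← WithTop.coe_add, WithTop.coe_inj] at h
    rw [← hz, WithTop.coe_eq_zero]
    omega
  set w := AddValuation.of v ((hv0 0).2 rfl) hv1 hadd hmul
  have hσ' : ((-1 : ℤ) : WithTop ℤ) ≤ w σ⁻¹ := by
    rw [AddValuation.map_inv, AddValuation.of_apply, hσ]
    rfl
  exact exists_smul_image_subset_X_pow_smul_image hcompat w hmonic hdeg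
    (fun i _ hj => valuation_coeff_zero_lt_of_strictMonoOn_NP w (hpos i).1 (hpos i).2 hj)
    (fun i => e.smul_symm_single_mk_one_eq_zero (Submodule.mem_span_singleton_self (g i)))
    e.span_range_symm_single_mk_one hO hfg hbasis hσ'

/-- Let `g₁, …, g_k` be monic nonconstant polynomials whose Newton polygons have only
positive slopes (i.e. start at `x = 0` and are strictly increasing up to the degree),
let `M ≅ ⊕ᵢ L[t]/L[t]gᵢ`, and let `Λ` be an `O`-lattice in `M`.  Then there is
`n₀ ∈ ℕ` with `tⁿΛ ⊇ σ⁻¹Λ` for all `n ≥ n₀`. -/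
theorem stmt17 {L M : Type*} [DivisionRing L]
    [AddCommGroup M] [Module (Polynomial L) M] [Module L M]
    (hcompat : ∀ (a : L) (m : M), a • m = (Polynomial.C a : Polynomial L) • m)
    (v : L → WithTop ℤ)
    (hv0 : ∀ x : L, v x = ⊤ ↔ x = 0)
    (hadd : ∀ x y : L, min (v x) (v y) ≤ v (x + y))
    (hmul : ∀ x y : L, v (x * y) = v x + v y)
    (hcomplete : ∀ x : ℕ → L,
      (∀ M' : ℤ, ∃ N : ℕ, ∀ n ≥ N, (M' : WithTop ℤ) ≤ v (x n)) →
      ∃ t : L, ∀ M' : ℤ, ∃ N : ℕ, ∀ n ≥ N,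
        (M' : WithTop ℤ) ≤ v (t - ∑ i ∈ Finset.range n, x i))
    (O : Subring L) (hO : (O : Set L) = {x : L | 0 ≤ v x})
    (σ : L) (hσ : v σ = 1)
    (k : ℕ) (g : Fin k → Polynomial L)
    (hmonic : ∀ i, (g i).Monic) (hdeg : ∀ i, 0 < (g i).natDegree)
    (hpos : ∀ i, (g i).coeff 0 ≠ 0 ∧
      ∀ x y : ℝ, 0 ≤ x → x < y → y ≤ ((g i).natDegree : ℝ) →
        NP v (g i) x < NP v (g i) y)
    (hiso : Nonempty (M ≃ₗ[Polynomial L]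
      (∀ i : Fin k, Polynomial L ⧸ Submodule.span (Polynomial L) {g i})))
    (Λ : Submodule ↥O M) (hfg : Λ.FG)
    (hbasis : ∃ (n : ℕ) (b : Module.Basis (Fin n) L M), ∀ i, b i ∈ Λ) :
    ∃ n₀ : ℕ, ∀ n ≥ n₀,
      (fun m : M => σ⁻¹ • m) '' (Λ : Set M) ⊆
        (fun m : M => ((Polynomial.X : Polynomial L) ^ n) • m) '' (Λ : Set M) :=
  stmt17_general hcompat v hv0 hadd hmul O hO σ hσ k g hmonic hdeg hpos hiso Λ hfg hbasis
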